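/- Let G be a graph obtained from a graph H by iteratively adding compliant edges (each added edge joins the endpoints of some flat path of the current graph). If H is outerplanar, then G is outerplanar. -/

import Mathlib

open SimpleGraph

universe u

/-- A flat (suspended) path: a path of length at least 2 all of whose internal
vertices have degree 2 in `G`. -/
def IsFlatPath {V : Type u} (G : SimpleGraph V) {x y : V} (p : G.Walk x y) : Prop :=
  p.IsPath ∧ 2 ≤ p.length ∧
    ∀ v ∈ p.support, v ≠ x → v ≠ y → (G.neighborSet v).ncard = 2

/-- An edge `xy` is compliant if `x` and `y` are also joined by a flat path. -/
def Compliant {V : Type u} (G : SimpleGraph V) (x y : V) : Prop :=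
  G.Adj x y ∧ ∃ p : G.Walk x y, IsFlatPath G p

/-- A graph is 2-connected if it has at least 3 vertices and remains connected
after deleting any single vertex. -/
def TwoConnected {V : Type u} (G : SimpleGraph V) : Prop :=
  3 ≤ Nat.card V ∧ ∀ v : V, ((⊤ : G.Subgraph).deleteVerts {v}).coe.Connected

/-- A (finite) graph is a cycle iff it is connected and 2-regular. -/
def IsCycleGraph {V : Type u} (G : SimpleGraph V) : Prop :=
  G.Connected ∧ ∀ v : V, (G.neighborSet v).ncard = 2

/-- Data exhibiting a subgraph of `G` which is a subdivision of `H`: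
branch vertices are given by an injection `f`, and each edge of `H` is
replaced by a path in `G`, these paths being internally disjoint and their
internal vertices avoiding the branch vertices. -/
structure SubdivisionIn {V : Type u} {W : Type*} (G : SimpleGraph V) (H : SimpleGraph W) where
  f : W → V
  inj : Function.Injective f
  path : ∀ ⦃u v : W⦄, H.Adj u v → G.Walk (f u) (f v)
  isPath : ∀ ⦃u v : W⦄ (h : H.Adj u v), (path h).IsPath
  internal_not_branch : ∀ ⦃u v : W⦄ (h : H.Adj u v), ∀ w ∈ (path h).support,
      (∃ z, w = f z) → w = f u ∨ w = f v
  internal_disjoint : ∀ ⦃u v u' v' : W⦄ (h : H.Adj u v) (h' : H.Adj u' v'),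
      s(u, v) ≠ s(u', v') → ∀ w ∈ (path h).support, w ∈ (path h').support →
        w = f u ∨ w = f v

/-- The vertices of the subdivided subgraph. -/
def SubdivisionIn.verts {V : Type u} {W : Type*} {G : SimpleGraph V} {H : SimpleGraph W}
    (D : SubdivisionIn G H) : Set V :=
  {w | ∃ (u v : W) (h : H.Adj u v), w ∈ (D.path h).support}

/-- `G` contains a subdivision of `H` as a subgraph. -/
def ContainsSubdivision {V : Type u} {W : Type*} (G : SimpleGraph V) (H : SimpleGraph W) : Prop :=
  Nonempty (SubdivisionIn G H)

/-- A graph is outerplanar iff it contains no subdivision of `K₄` or `K_{2,3}`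
as a subgraph. -/
def Outerplanar {V : Type u} (G : SimpleGraph V) : Prop :=
  ¬ ContainsSubdivision G (⊤ : SimpleGraph (Fin 4)) ∧
  ¬ ContainsSubdivision G (completeBipartiteGraph (Fin 2) (Fin 3))
/-- One step of adding a compliant edge: add an edge joining the endpoints of
some flat path of the current graph. -/
def AddCompliantStep {V : Type u} (H G : SimpleGraph V) : Prop :=
  ∃ x y : V, x ≠ y ∧ ¬ H.Adj x y ∧ (∃ p : H.Walk x y, IsFlatPath H p) ∧
    G = H ⊔ SimpleGraph.fromEdgeSet {s(x, y)}

/-!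
Let `p` be a flat `x`–`y` path of `H` and `D` a subdivision of `K = K₄` or `K_{2,3}` in `H + xy`.
If no path of `D` uses the edge `xy`, then `D` already lies in `H`. Otherwise we replace `xy` by
`p`, which needs the inner vertices of `p`, all of degree two, to avoid `D`. None of them is a
branch vertex: one of degree three would have three neighbours, and one of degree two in `K_{2,3}`
would send its two paths to `x` and `y`, making its two non-adjacent neighbours the ends of the
path through `xy`. So a path of `D` through an inner vertex of `p` contains all of `p`, in
particular `x` and `y`; as two paths of `D` share at most a common end, it is the path through
`xy`, which cannot contain both the edge `xy` and the rest of the cycle `p + xy`.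
-/

namespace SimpleGraph

variable {V : Type*} {G H : SimpleGraph V}

theorem eq_or_eq_of_ncard_neighborSet_eq_two {s a b w : V} (h2 : (G.neighborSet s).ncard = 2)
    (ha : G.Adj s a) (hb : G.Adj s b) (hab : a ≠ b) (hw : G.Adj s w) : w = a ∨ w = b := by
  obtain ⟨c, d, -, hcd⟩ := Set.ncard_eq_two.mp h2
  have hmem : ∀ t, G.Adj s t → t = c ∨ t = d := fun t ht => by
    have : t ∈ ({c, d} : Set V) := hcd ▸ ht
    simpa using this
  rcases hmem a ha with rfl | rfl <;> rcases hmem b hb with rfl | rfl <;>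
    rcases hmem w hw with rfl | rfl <;> tauto

theorem mem_edgeSet_of_mem_edgeSet_sup_edge {x y : V} {e : Sym2 V}
    (he : e ∈ (H ⊔ fromEdgeSet {s(x, y)}).edgeSet) (hne : e ≠ s(x, y)) : e ∈ H.edgeSet := by
  simp only [edgeSet_sup, edgeSet_fromEdgeSet, Set.mem_union, Set.mem_sdiff,
    Set.mem_singleton_iff] at he
  tauto

namespace Walk

def innerVerts {x y : V} (p : G.Walk x y) : Set V := {v | v ∈ p.support ∧ v ≠ x ∧ v ≠ y}

variable {a b c d x y w : V}

@[simp]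
theorem innerVerts_reverse (p : G.Walk x y) : p.reverse.innerVerts = p.innerVerts := by
  ext v
  simp only [innerVerts, support_reverse, List.mem_reverse, Set.mem_ofPred_eq]
  tauto

theorem start_notMem_innerVerts (p : G.Walk x y) : x ∉ p.innerVerts := fun h => h.2.1 rfl

theorem end_notMem_innerVerts (p : G.Walk x y) : y ∉ p.innerVerts := fun h => h.2.2 rfl

theorem exists_eq_append_cons_of_mem_edges (q : G.Walk c d) (he : s(x, y) ∈ q.edges) :
    (∃ (q₁ : G.Walk c x) (h : G.Adj x y) (q₂ : G.Walk y d), q = q₁.append (cons h q₂)) ∨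
      ∃ (q₁ : G.Walk c y) (h : G.Adj y x) (q₂ : G.Walk x d), q = q₁.append (cons h q₂) := by
  induction q with
  | nil => simp at he
  | cons h q ih =>
    rw [edges_cons, List.mem_cons, Sym2.eq_iff] at he
    rcases he with (⟨rfl, rfl⟩ | ⟨rfl, rfl⟩) | he
    · exact .inl ⟨nil, h, q, rfl⟩
    · exact .inr ⟨nil, h, q, rfl⟩
    · rcases ih he with ⟨q₁, h', q₂, rfl⟩ | ⟨q₁, h', q₂, rfl⟩
      · exact .inl ⟨cons h q₁, h', q₂, rfl⟩
      · exact .inr ⟨cons h q₁, h', q₂, rfl⟩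

section

variable [DecidableEq V] {p : G.Walk x y} {s : V}

theorem mem_innerVerts_of_mem_takeUntil (hp : p.IsPath) (hw : w ∈ p.support) (hwy : w ≠ y)
    (hs : s ∈ (p.takeUntil w hw).support) (hsx : s ≠ x) : s ∈ p.innerVerts :=
  ⟨p.support_takeUntil_subset_support hw hs, hsx,
    fun hsy => endpoint_notMem_support_takeUntil hp hw hwy.symm (hsy ▸ hs)⟩

theorem mem_innerVerts_of_mem_dropUntil (hp : p.IsPath) (hw : w ∈ p.support) (hwx : w ≠ x)
    (hs : s ∈ (p.dropUntil w hw).support) (hsy : s ≠ y) : s ∈ p.innerVerts := by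
  refine ⟨p.support_dropUntil_subset_support hw hs, fun hsx => ?_, hsy⟩
  have hp' : ((p.takeUntil w hw).append (p.dropUntil w hw)).IsPath := by rwa [take_spec]
  obtain rfl : s = w := by
    by_contra hsw
    exact hp'.ne_of_mem_support_of_append hsw (start_mem_support _) hs hsx.symm
  exact hwx hsx

end

namespace IsPath

theorem append {p : G.Walk a b} {q : G.Walk b c} (hp : p.IsPath) (hq : q.IsPath)
    (h : ∀ w ∈ p.support, w ∈ q.support → w = b) : (p.append q).IsPath := by
  have hq' := hq.support_nodup
  rw [← cons_tail_support] at hq'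
  rw [isPath_def, support_append]
  refine hp.support_nodup.append (List.nodup_cons.mp hq').2 fun w hwp hwq => ?_
  obtain rfl := h w hwp (List.mem_of_mem_tail hwq)
  exact (List.nodup_cons.mp hq').1 hwq

theorem exists_adj_adj_of_mem_support {q : G.Walk c d} (hq : q.IsPath) {s : V}
    (hs : s ∈ q.support) (hsc : s ≠ c) (hsd : s ≠ d) :
    ∃ a b, a ≠ b ∧ G.Adj s a ∧ G.Adj s b ∧ a ∈ q.support ∧ b ∈ q.support := by
  obtain ⟨q₁, q₂, -, -, rfl⟩ := hq.mem_support_iff_exists_append.mp hs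
  have h₁ : ¬q₁.reverse.Nil := not_nil_of_ne hsc
  have h₂ : ¬q₂.Nil := not_nil_of_ne hsd
  have ha : q₁.reverse.snd ∈ q₁.support := by simp
  have hb : q₂.snd ∈ q₂.support := getVert_mem_support q₂ 1
  refine ⟨q₁.reverse.snd, q₂.snd, ?_, adj_snd h₁, adj_snd h₂, ?_, ?_⟩
  · exact hq.ne_of_mem_support_of_append (G.ne_of_adj (adj_snd h₂)).symm ha hb
  · simp
  · simp [hb]

theorem mem_support_of_adj {q : G.Walk c d} (hq : q.IsPath) {s : V} (hs : s ∈ q.support)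
    (hsc : s ≠ c) (hsd : s ≠ d) (h2 : (G.neighborSet s).ncard = 2) (hw : G.Adj s w) :
    w ∈ q.support := by
  obtain ⟨a, b, hab, ha, hb, haq, hbq⟩ := hq.exists_adj_adj_of_mem_support hs hsc hsd
  rcases eq_or_eq_of_ncard_neighborSet_eq_two h2 ha hb hab hw with rfl | rfl <;> assumption

theorem end_mem_support {q : G.Walk c d} (hq : q.IsPath) (r : G.Walk a b)
    (ha : a ∈ q.support)
    (hr : ∀ s ∈ r.support, s ≠ b → (G.neighborSet s).ncard = 2 ∧ s ≠ c ∧ s ≠ d) :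
    b ∈ q.support := by
  induction r with
  | nil => exact ha
  | @cons a a' b h r ih =>
    by_cases hab : a = b
    · exact hab ▸ ha
    obtain ⟨h2, hac, had⟩ := hr a (by simp) hab
    exact ih (hq.mem_support_of_adj ha hac had h2 h) fun s hs => hr s (by simp [hs])

theorem disjoint_support_of_append_cons {q₁ : G.Walk c a} {h : G.Adj a b} {q₂ : G.Walk b d}
    (hq : (q₁.append (cons h q₂)).IsPath) : q₁.support.Disjoint q₂.support := by
  have := hq.support_nodup
  rw [support_append, support_cons, List.tail_cons] at this
  exact List.disjoint_of_nodup_append this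

theorem exists_reroute_of_eq_append_cons (hGH : ∀ e ∈ G.edgeSet, e ≠ s(a, b) → e ∈ H.edgeSet)
    {q₁ : G.Walk c a} {h : G.Adj a b} {q₂ : G.Walk b d} (hq : (q₁.append (cons h q₂)).IsPath)
    {p : H.Walk a b} (hp : p.IsPath)
    (hpq : ∀ w ∈ p.support, w ∈ (q₁.append (cons h q₂)).support → w = a ∨ w = b) :
    ∃ q : H.Walk c d, q.IsPath ∧
      ∀ w ∈ q.support, w ∈ (q₁.append (cons h q₂)).support ∨ w ∈ p.support := by
  have hdisj := hq.disjoint_support_of_append_cons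
  have hedges := hq.isTrail.edges_nodup
  rw [edges_append, edges_cons, List.nodup_append, List.nodup_cons] at hedges
  have he₁ : s(a, b) ∉ q₁.edges := fun he => hedges.2.2 _ he _ List.mem_cons_self rfl
  have he₂ : s(a, b) ∉ q₂.edges := hedges.2.1.1
  let r₁ := q₁.transfer H fun e he =>
    hGH e (q₁.edges_subset_edgeSet he) (ne_of_mem_of_not_mem he he₁)
  let r₂ := q₂.transfer H fun e he =>
    hGH e (q₂.edges_subset_edgeSet he) (ne_of_mem_of_not_mem he he₂)
  have hr₂ : (p.append r₂).IsPath := by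
    refine hp.append (hq.of_append_right.of_cons.transfer _) fun w hwp hw₂ => ?_
    rw [support_transfer] at hw₂
    rcases hpq w hwp (by simp [hw₂]) with rfl | rfl
    · exact absurd hw₂ (hdisj q₁.end_mem_support)
    · rfl
  refine ⟨r₁.append (p.append r₂), (hq.of_append_left.transfer _).append hr₂ ?_, ?_⟩
  · intro w hw₁ hw
    rw [support_transfer] at hw₁
    rcases (mem_support_append_iff _ _).mp hw with hwp | hw₂
    · rcases hpq w hwp (by simp [hw₁]) with rfl | rfl
      · rfl
      · exact absurd q₂.start_mem_support (hdisj hw₁)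
    · exact absurd (by simpa [r₂] using hw₂) (hdisj hw₁)
  · intro w hw
    simp only [r₁, r₂, mem_support_append_iff, support_transfer] at hw
    rcases hw with hw | hw | hw <;> simp [hw]

theorem exists_reroute (hGH : ∀ e ∈ G.edgeSet, e ≠ s(x, y) → e ∈ H.edgeSet)
    {q : G.Walk c d} (hq : q.IsPath) (he : s(x, y) ∈ q.edges) {p : H.Walk x y} (hp : p.IsPath)
    (hpq : ∀ w ∈ p.support, w ∈ q.support → w = x ∨ w = y) :
    ∃ q' : H.Walk c d, q'.IsPath ∧ ∀ w ∈ q'.support, w ∈ q.support ∨ w ∈ p.support := by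
  rcases q.exists_eq_append_cons_of_mem_edges he with ⟨q₁, h, q₂, rfl⟩ | ⟨q₁, h, q₂, rfl⟩
  · exact hq.exists_reroute_of_eq_append_cons hGH hp hpq
  · rw [Sym2.eq_swap] at hGH
    simpa using hq.exists_reroute_of_eq_append_cons hGH hp.reverse fun w hwp hwq =>
      (hpq w (by simpa using hwp) hwq).symm

end IsPath

end Walk

end SimpleGraph

open Walk

section FlatPath

variable {V : Type*} {G H : SimpleGraph V} {x y c d v w : V} {p : G.Walk x y}

theorem IsFlatPath.ne (hp : IsFlatPath G p) : x ≠ y := by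
  rintro rfl
  have := (isPath_iff_nil.mp hp.1).length_eq_zero
  have := hp.2.1
  omega

theorem IsFlatPath.reverse (hp : IsFlatPath G p) : IsFlatPath G p.reverse :=
  ⟨hp.1.reverse, by simpa using hp.2.1, fun v hv hvy hvx => hp.2.2 v (by simpa using hv) hvx hvy⟩

theorem IsFlatPath.ncard_neighborSet_eq_two (hp : IsFlatPath G p) (hv : v ∈ p.innerVerts) :
    (G.neighborSet v).ncard = 2 :=
  hp.2.2 v hv.1 hv.2.1 hv.2.2

theorem IsFlatPath.mapLe_sup_edge {p : H.Walk x y} (hp : IsFlatPath H p) :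
    IsFlatPath (H ⊔ fromEdgeSet {s(x, y)}) (p.mapLe le_sup_left) := by
  refine ⟨hp.1.mapLe _, by simpa using hp.2.1, fun v hv hvx hvy => ?_⟩
  rw [support_mapLe_eq_support] at hv
  convert hp.2.2 v hv hvx hvy using 2
  ext w
  simp only [mem_neighborSet, sup_adj, fromEdgeSet_adj, Set.mem_singleton_iff, Sym2.eq_iff]
  tauto

section

variable [DecidableEq V]

theorem IsFlatPath.start_mem_support (hp : IsFlatPath G p) {q : G.Walk c d} (hq : q.IsPath)
    (hw : w ∈ p.support) (hwy : w ≠ y) (hwq : w ∈ q.support)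
    (hcd : ∀ s ∈ (p.takeUntil w hw).support, s ∈ p.innerVerts → s ≠ c ∧ s ≠ d) :
    x ∈ q.support := by
  refine hq.end_mem_support (p.takeUntil w hw).reverse hwq fun s hs hsx => ?_
  rw [support_reverse, List.mem_reverse] at hs
  have hs' := mem_innerVerts_of_mem_takeUntil hp.1 hw hwy hs hsx
  exact ⟨hp.ncard_neighborSet_eq_two hs', hcd s hs hs'⟩

theorem IsFlatPath.end_mem_support (hp : IsFlatPath G p) {q : G.Walk c d} (hq : q.IsPath)
    (hw : w ∈ p.support) (hwx : w ≠ x) (hwq : w ∈ q.support)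
    (hcd : ∀ s ∈ (p.dropUntil w hw).support, s ∈ p.innerVerts → s ≠ c ∧ s ≠ d) :
    y ∈ q.support := by
  refine hq.end_mem_support (p.dropUntil w hw) hwq fun s hs hsy => ?_
  have hs' := mem_innerVerts_of_mem_dropUntil hp.1 hw hwx hs hsy
  exact ⟨hp.ncard_neighborSet_eq_two hs', hcd s hs hs'⟩

theorem IsFlatPath.start_mem_and_end_mem (hp : IsFlatPath G p) {q : G.Walk c d} (hq : q.IsPath)
    (hc : c ∉ p.innerVerts) (hd : d ∉ p.innerVerts) (hv : v ∈ p.innerVerts)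
    (hvq : v ∈ q.support) : x ∈ q.support ∧ y ∈ q.support := by
  have hcd : ∀ s ∈ p.innerVerts, s ≠ c ∧ s ≠ d := fun s hs =>
    ⟨fun h => hc (h ▸ hs), fun h => hd (h ▸ hs)⟩
  exact ⟨hp.start_mem_support hq hv.1 hv.2.2 hvq fun s _ => hcd s,
    hp.end_mem_support hq hv.1 hv.2.1 hvq fun s _ => hcd s⟩

/-- The second vertex of `q` is a neighbour of `v` on `p`; follow `p` from it away from `v`. -/
theorem IsFlatPath.start_mem_or_end_mem (hp : IsFlatPath G p) {q : G.Walk v d} (hq : q.IsPath)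
    (hv : v ∈ p.innerVerts) (hd : d ∉ p.innerVerts) : x ∈ q.support ∨ y ∈ q.support := by
  have hnil : ¬q.Nil := not_nil_of_ne fun h => hd (h ▸ hv)
  have hwq : q.snd ∈ q.support := getVert_mem_support q 1
  have hwp : q.snd ∈ p.support :=
    hp.1.mem_support_of_adj hv.1 hv.2.1 hv.2.2 (hp.ncard_neighborSet_eq_two hv) (adj_snd hnil)
  by_cases hwx : q.snd = x
  · exact .inl (hwx ▸ hwq)
  by_cases hwy : q.snd = y
  · exact .inr (hwy ▸ hwq)
  have hwv : q.snd ≠ v := (G.ne_of_adj (adj_snd hnil)).symm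
  have hdv : ∀ s ∈ p.innerVerts, s ≠ d := fun s hs h => hd (h ▸ hs)
  have hp' : ((p.takeUntil _ hwp).append (p.dropUntil _ hwp)).IsPath := by
    rw [take_spec]; exact hp.1
  by_cases hvt : v ∈ (p.takeUntil _ hwp).support
  · have hvd : v ∉ (p.dropUntil _ hwp).support := fun h =>
      hp'.ne_of_mem_support_of_append hwv.symm hvt h rfl
    exact .inr (hp.end_mem_support hq hwp hwx hwq fun s hs hs' =>
      ⟨fun h => hvd (h ▸ hs), hdv s hs'⟩)
  · exact .inl (hp.start_mem_support hq hwp hwy hwq fun s hs hs' =>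
      ⟨fun h => hvt (h ▸ hs), hdv s hs'⟩)

theorem IsFlatPath.notMem_support_of_eq_append_cons (hp : IsFlatPath G p) {q₁ : G.Walk c x}
    {h : G.Adj x y} {q₂ : G.Walk y d} (hq : (q₁.append (cons h q₂)).IsPath)
    (hc : c ∉ p.innerVerts) (hd : d ∉ p.innerVerts) (hv : v ∈ p.innerVerts) :
    v ∉ (q₁.append (cons h q₂)).support := by
  have hdisj := hq.disjoint_support_of_append_cons
  intro hvq
  rw [mem_support_append_iff, support_cons, List.mem_cons] at hvq
  rcases hvq with hv₁ | hvx | hv₂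
  · have hy := (hp.start_mem_and_end_mem hq.of_append_left hc p.start_notMem_innerVerts hv hv₁).2
    exact hdisj hy q₂.start_mem_support
  · exact hv.2.1 hvx
  · have hx := (hp.start_mem_and_end_mem hq.of_append_right.of_cons
      p.end_notMem_innerVerts hd hv hv₂).1
    exact hdisj q₁.end_mem_support hx

theorem IsFlatPath.notMem_support_of_mem_edges (hp : IsFlatPath G p) {q : G.Walk c d}
    (hq : q.IsPath) (he : s(x, y) ∈ q.edges) (hc : c ∉ p.innerVerts) (hd : d ∉ p.innerVerts)
    (hv : v ∈ p.innerVerts) : v ∉ q.support := by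
  rcases q.exists_eq_append_cons_of_mem_edges he with ⟨q₁, h, q₂, rfl⟩ | ⟨q₁, h, q₂, rfl⟩
  · exact hp.notMem_support_of_eq_append_cons hq hc hd hv
  · exact hp.reverse.notMem_support_of_eq_append_cons hq (by simpa) (by simpa) (by simpa)

end

end FlatPath

def HasThreeNeighbors {W : Type*} (K : SimpleGraph W) (t : W) : Prop :=
  ∃ a b c, a ≠ b ∧ a ≠ c ∧ b ≠ c ∧ K.Adj t a ∧ K.Adj t b ∧ K.Adj t c

/-- Satisfied by `K₄` and `K_{2,3}`; it is what keeps the branch vertices of a subdivision off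
the inner vertices of a flat path whose closing edge the subdivision uses. -/
def IsThickOrBetweenThick {W : Type*} (K : SimpleGraph W) : Prop :=
  ∀ t, HasThreeNeighbors K t ∨ ∃ a b, a ≠ b ∧ K.Adj t a ∧ K.Adj t b ∧ ¬K.Adj a b ∧
    HasThreeNeighbors K a ∧ HasThreeNeighbors K b

namespace SubdivisionIn

variable {V W : Type*} {G : SimpleGraph V} {K : SimpleGraph W} (D : SubdivisionIn G K)
  {t a b u v u' v' : W} {x y w : V}

theorem adj_snd (h : K.Adj u v) : G.Adj (D.f u) (D.path h).snd :=
  Walk.adj_snd (Walk.not_nil_of_ne (D.inj.ne h.ne))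

theorem exists_eq_f_of_mem_support (h : K.Adj u v) (h' : K.Adj u' v')
    (hne : s(u, v) ≠ s(u', v')) (hw : w ∈ (D.path h).support) (hw' : w ∈ (D.path h').support) :
    ∃ z, w = D.f z ∧ z ∈ s(u, v) ∧ z ∈ s(u', v') := by
  have hmem : ∀ {z a b : W}, D.f z = D.f a ∨ D.f z = D.f b → z ∈ s(a, b) := by
    simp [D.inj.eq_iff, Sym2.mem_iff]
  rcases D.internal_disjoint h h' hne w hw hw' with rfl | rfl
  · exact ⟨u, rfl, Sym2.mem_mk_left u v, hmem (D.internal_disjoint h' h hne.symm _ hw' hw)⟩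
  · exact ⟨v, rfl, Sym2.mem_mk_right u v, hmem (D.internal_disjoint h' h hne.symm _ hw' hw)⟩

theorem sym2_eq_of_mem_support (h : K.Adj u v) (h' : K.Adj u' v') (hxy : x ≠ y)
    (hx : x ∈ (D.path h).support) (hy : y ∈ (D.path h).support)
    (hx' : x ∈ (D.path h').support) (hy' : y ∈ (D.path h').support) : s(u, v) = s(u', v') := by
  by_contra hne
  obtain ⟨z₁, rfl, h₁, h₁'⟩ := D.exists_eq_f_of_mem_support h h' hne hx hx'
  obtain ⟨z₂, rfl, h₂, h₂'⟩ := D.exists_eq_f_of_mem_support h h' hne hy hy'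
  exact hne (Sym2.eq_of_ne_mem (D.inj.ne_iff.mp hxy) h₁ h₂ h₁' h₂')

theorem mem_of_mem_support (h : K.Adj t a) (h' : K.Adj u v) (hw : w ∈ (D.path h).support)
    (hw' : w ∈ (D.path h').support) (hwt : w ≠ D.f t) : a ∈ s(u, v) := by
  by_cases heq : s(t, a) = s(u, v)
  · exact heq ▸ Sym2.mem_mk_right t a
  obtain ⟨z, rfl, hz, hz'⟩ := D.exists_eq_f_of_mem_support h h' heq hw hw'
  rcases Sym2.mem_iff.mp hz with rfl | rfl
  · exact absurd rfl hwt
  · exact hz'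

theorem snd_ne_snd (ha : K.Adj t a) (hb : K.Adj t b) (hab : a ≠ b) :
    (D.path ha).snd ≠ (D.path hb).snd := by
  intro heq
  have hne : s(t, a) ≠ s(t, b) := fun h => hab (Sym2.congr_right.mp h)
  obtain ⟨z, hz, hza, hzb⟩ := D.exists_eq_f_of_mem_support ha hb hne
    (Walk.getVert_mem_support _ 1) (by rw [← Walk.snd, heq]; exact Walk.getVert_mem_support _ 1)
  obtain rfl : z = t := by
    rw [Sym2.mem_iff] at hza hzb
    rcases hza with rfl | rfl
    · rfl
    · exact hzb.resolve_right hab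
  exact G.ne_of_adj (D.adj_snd ha) hz.symm

theorem ncard_neighborSet_ne_two (ht : HasThreeNeighbors K t) :
    (G.neighborSet (D.f t)).ncard ≠ 2 := by
  obtain ⟨a, b, c, hab, hac, hbc, ha, hb, hc⟩ := ht
  intro h2
  rcases eq_or_eq_of_ncard_neighborSet_eq_two h2 (D.adj_snd ha) (D.adj_snd hb)
    (D.snd_ne_snd ha hb hab) (D.adj_snd hc) with h | h
  · exact D.snd_ne_snd ha hc hac h.symm
  · exact D.snd_ne_snd hb hc hbc h.symm

theorem containsSubdivision_of_reroute {G' : SimpleGraph V} (X : ∀ ⦃u v : W⦄, K.Adj u v → Set V)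
    (hr : ∀ ⦃u v⦄ (h : K.Adj u v), ∃ r : G'.Walk (D.f u) (D.f v), r.IsPath ∧
      ∀ w ∈ r.support, w ∈ (D.path h).support ∨ w ∈ X h)
    (hXf : ∀ ⦃u v⦄ (h : K.Adj u v) t, D.f t ∉ X h)
    (hXD : ∀ ⦃u v u' v'⦄ (h : K.Adj u v) (h' : K.Adj u' v'), s(u, v) ≠ s(u', v') →
      ∀ w ∈ X h, w ∉ (D.path h').support)
    (hXX : ∀ ⦃u v u' v'⦄ (h : K.Adj u v) (h' : K.Adj u' v'), s(u, v) ≠ s(u', v') →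
      ∀ w ∈ X h, w ∉ X h') :
    ContainsSubdivision G' K := by
  choose r hr hsupp using hr
  refine ⟨⟨D.f, D.inj, r, hr, fun u v h w hw ⟨z, hz⟩ => ?_, fun u v u' v' h h' hne w hw hw' => ?_⟩⟩
  · rcases hsupp h w hw with hw | hw
    · exact D.internal_not_branch h w hw ⟨z, hz⟩
    · exact absurd (hz ▸ hw) (hXf h z)
  · rcases hsupp h w hw with hw | hw <;> rcases hsupp h' w hw' with hw' | hw'
    · exact D.internal_disjoint h h' hne w hw hw'
    · exact absurd hw (hXD h' h hne.symm w hw')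
    · exact absurd hw' (hXD h h' hne w hw)
    · exact absurd hw' (hXX h h' hne w hw)

theorem f_notMem_innerVerts [DecidableEq V] (hK : IsThickOrBetweenThick K) {p : G.Walk x y}
    (hp : IsFlatPath G p) (h₀ : K.Adj u v) (he : s(x, y) ∈ (D.path h₀).edges) (t : W) :
    D.f t ∉ p.innerVerts := by
  intro ht
  have hthick : ∀ {a}, HasThreeNeighbors K a → D.f a ∉ p.innerVerts := fun h3 hin =>
    D.ncard_neighborSet_ne_two h3 (hp.ncard_neighborSet_eq_two hin)
  rcases hK t with h3 | ⟨a₁, a₂, hne, h₁, h₂, hnadj, h3₁, h3₂⟩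
  · exact hthick h3 ht
  have hend : ∀ {a} (h : K.Adj t a), HasThreeNeighbors K a → a ∈ s(u, v) := fun h h3 => by
    rcases hp.start_mem_or_end_mem (D.isPath h) ht (hthick h3) with hx | hy
    · exact D.mem_of_mem_support h h₀ hx ((D.path h₀).fst_mem_support_of_mem_edges he)
        fun hxt => p.start_notMem_innerVerts (hxt ▸ ht)
    · exact D.mem_of_mem_support h h₀ hy ((D.path h₀).snd_mem_support_of_mem_edges he)
        fun hyt => p.end_notMem_innerVerts (hyt ▸ ht)
  have huv : s(u, v) = s(a₁, a₂) := (Sym2.mem_and_mem_iff hne).mp ⟨hend h₁ h3₁, hend h₂ h3₂⟩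
  exact hnadj (by rw [← SimpleGraph.mem_edgeSet, ← huv]; exact h₀)

end SubdivisionIn

namespace SubdivisionIn

variable {V W : Type*} {H : SimpleGraph V} {K : SimpleGraph W} {x y : V}
  (D : SubdivisionIn (H ⊔ fromEdgeSet {s(x, y)}) K)

theorem exists_isPath_of_notMem_edges {u v : W} (h : K.Adj u v)
    (he : s(x, y) ∉ (D.path h).edges) :
    ∃ r : H.Walk (D.f u) (D.f v), r.IsPath ∧ ∀ w ∈ r.support, w ∈ (D.path h).support :=
  ⟨(D.path h).transfer H fun e he' => mem_edgeSet_of_mem_edgeSet_sup_edge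
      ((D.path h).edges_subset_edgeSet he') (ne_of_mem_of_not_mem he' he),
    (D.isPath h).transfer _, fun w hw => by rwa [support_transfer] at hw⟩

theorem containsSubdivision_of_forall_notMem_edges
    (hunused : ∀ ⦃u v⦄ (h : K.Adj u v), s(x, y) ∉ (D.path h).edges) :
    ContainsSubdivision H K := by
  refine D.containsSubdivision_of_reroute (fun _ _ _ => ∅) (fun u v h => ?_)
    (by simp) (by simp) (by simp)
  obtain ⟨r, hr, hsupp⟩ := D.exists_isPath_of_notMem_edges h (hunused h)
  exact ⟨r, hr, fun w hw => .inl (hsupp w hw)⟩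

theorem containsSubdivision_of_mem_edges [DecidableEq V] (hK : IsThickOrBetweenThick K)
    {p : H.Walk x y} (hp : IsFlatPath H p) {u₀ v₀ : W} (h₀ : K.Adj u₀ v₀)
    (he₀ : s(x, y) ∈ (D.path h₀).edges) : ContainsSubdivision H K := by
  have hpG := hp.mapLe_sup_edge
  have hf := D.f_notMem_innerVerts hK hpG h₀ he₀
  have hxy : ∀ ⦃u v⦄ (h : K.Adj u v), s(x, y) ∈ (D.path h).edges →
      x ∈ (D.path h).support ∧ y ∈ (D.path h).support := fun _ _ h he =>
    ⟨(D.path h).fst_mem_support_of_mem_edges he, (D.path h).snd_mem_support_of_mem_edges he⟩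
  refine D.containsSubdivision_of_reroute
    (fun _ _ h => {w | s(x, y) ∈ (D.path h).edges ∧ w ∈ (p.mapLe le_sup_left).innerVerts})
    (fun u v h => ?_) (fun _ _ _ t ht => hf t ht.2) ?_ ?_
  · by_cases he : s(x, y) ∈ (D.path h).edges
    · obtain ⟨r, hr, hsupp⟩ := (D.isPath h).exists_reroute
        (fun _ => mem_edgeSet_of_mem_edgeSet_sup_edge) he hp.1 fun w hwp hwq => by
          by_contra hw
          rw [not_or] at hw
          exact hpG.notMem_support_of_mem_edges (D.isPath h) he (hf u) (hf v)
            ⟨by simpa using hwp, hw.1, hw.2⟩ hwq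
      refine ⟨r, hr, fun w hw => ?_⟩
      rcases hsupp w hw with hw | hw
      · exact .inl hw
      by_cases hwx : w = x
      · exact .inl (hwx ▸ (hxy h he).1)
      by_cases hwy : w = y
      · exact .inl (hwy ▸ (hxy h he).2)
      exact .inr ⟨he, by simpa using hw, hwx, hwy⟩
    · obtain ⟨r, hr, hsupp⟩ := D.exists_isPath_of_notMem_edges h he
      exact ⟨r, hr, fun w hw => .inl (hsupp w hw)⟩
  · rintro u v u' v' h h' hne w ⟨he, hw⟩ hw'
    obtain ⟨hx', hy'⟩ := hpG.start_mem_and_end_mem (D.isPath h') (hf u') (hf v') hw hw'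
    exact hne (D.sym2_eq_of_mem_support h h' hp.ne (hxy h he).1 (hxy h he).2 hx' hy')
  · rintro u v u' v' h h' hne w ⟨he, -⟩ ⟨he', -⟩
    exact hne (D.sym2_eq_of_mem_support h h' hp.ne (hxy h he).1 (hxy h he).2
      (hxy h' he').1 (hxy h' he').2)

end SubdivisionIn

theorem containsSubdivision_of_sup_edge {V W : Type*} {H : SimpleGraph V} {K : SimpleGraph W}
    (hK : IsThickOrBetweenThick K) {x y : V} {p : H.Walk x y} (hp : IsFlatPath H p)
    (hD : ContainsSubdivision (H ⊔ fromEdgeSet {s(x, y)}) K) : ContainsSubdivision H K := by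
  classical
  obtain ⟨D⟩ := hD
  by_cases hused : ∃ u v, ∃ h : K.Adj u v, s(x, y) ∈ (D.path h).edges
  · obtain ⟨u₀, v₀, h₀, he₀⟩ := hused
    exact D.containsSubdivision_of_mem_edges hK hp h₀ he₀
  · exact D.containsSubdivision_of_forall_notMem_edges fun u v h he => hused ⟨u, v, h, he⟩

theorem isThickOrBetweenThick_top : IsThickOrBetweenThick (⊤ : SimpleGraph (Fin 4)) := by
  intro t
  left
  unfold HasThreeNeighbors
  revert t
  decide

theorem isThickOrBetweenThick_completeBipartiteGraph :
    IsThickOrBetweenThick (completeBipartiteGraph (Fin 2) (Fin 3)) := by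
  have hleft : ∀ i, HasThreeNeighbors (completeBipartiteGraph (Fin 2) (Fin 3)) (.inl i) :=
    fun i => ⟨.inr 0, .inr 1, .inr 2, by decide, by decide, by decide, by simp, by simp, by simp⟩
  rintro (i | j)
  · exact .inl (hleft i)
  · exact .inr ⟨.inl 0, .inl 1, by decide, by simp, by simp, by simp, hleft 0, hleft 1⟩

theorem Outerplanar.of_addCompliantStep {V : Type*} {A B : SimpleGraph V}
    (hstep : AddCompliantStep A B) (hA : Outerplanar A) : Outerplanar B := by
  obtain ⟨x, y, -, -, ⟨p, hp⟩, rfl⟩ := hstep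
  exact ⟨fun h => hA.1 (containsSubdivision_of_sup_edge isThickOrBetweenThick_top hp h),
    fun h => hA.2 (containsSubdivision_of_sup_edge
      isThickOrBetweenThick_completeBipartiteGraph hp h)⟩

/-- If `G` is obtained from `H` by iteratively adding compliant edges and `H` is
outerplanar, then `G` is outerplanar. -/
theorem stmt19 {V : Type u} (H G : SimpleGraph V)
    (hiter : Relation.ReflTransGen AddCompliantStep H G)
    (hop : Outerplanar H) : Outerplanar G := by
  induction hiter with
  | refl => exact hop
  | tail _ hstep ih => exact ih.of_addCompliantStep hstep
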